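/- arXiv:2209.07884 — 2 statements merged into one kernel-verified Lean document; each statement's English description precedes it below -/
import Mathlib

section
/- Let H, P, Q be real m×m matrices such that P and Q are symmetric positive definite and the discrete Lyapunov equation Hᵀ P H − P = −Q holds. Let ε ≥ 0. Then there exists a constant B ≥ 0, depending only on H, P, Q and ε, such that for every disturbance sequence d : ℕ → ℝᵐ with ‖d(k)‖ ≤ ε for all k, and every sequence x : ℕ → ℝᵐ satisfying the error dynamics x(k+1) = H x(k) + d(k+1) for all k, there exists K ∈ ℕ with ‖x(k)‖ ≤ B for all k ≥ K. (That is, the error dynamics of the disturbance observer is uniformly ultimately bounded.) -/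
/-!
Factor `P = SᵀS` with `S` injective, so that `v ↦ ‖S v‖` is a norm equivalent to the Euclidean
one with `‖S v‖² = vᵀPv`. Since `Q` dominates a positive multiple of `P`, the Lyapunov equation
`‖S (H v)‖² = ‖S v‖² - vᵀQv` makes `H` a strict contraction, with some ratio `r < 1`, for this
norm. Hence `u k = ‖S x(k)‖` obeys `u (k + 1) ≤ r u k + ‖S‖ ε`, so it eventually drops below
`‖S‖ ε / (1 - r) + 1`, a bound independent of the initial state.
-/

open Matrix Filter Topology
open scoped MatrixOrder

theorem eventually_le_div_add_of_le_mul_add {u : ℕ → ℝ} {r b δ : ℝ} (hr0 : 0 ≤ r)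
    (hr1 : r < 1) (hδ : 0 < δ) (hu : ∀ k, u (k + 1) ≤ r * u k + b) :
    ∀ᶠ k in atTop, u k ≤ b / (1 - r) + δ := by
  set L := b / (1 - r) with hL_def
  have hL : r * L + b = L := by
    rw [hL_def]
    field_simp [(sub_pos.2 hr1).ne']
    ring
  have hgeom : ∀ k, u k - L ≤ r ^ k * (u 0 - L) := by
    intro k
    induction k with
    | zero => simp
    | succ k ih =>
      calc u (k + 1) - L ≤ r * (u k - L) := by linarith [hu k]
        _ ≤ r * (r ^ k * (u 0 - L)) := mul_le_mul_of_nonneg_left ih hr0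
        _ = r ^ (k + 1) * (u 0 - L) := by ring
  have hlim : Tendsto (fun k => r ^ k * (u 0 - L)) atTop (𝓝 0) := by
    simpa using (tendsto_pow_atTop_nhds_zero_of_lt_one hr0 hr1).mul_const (u 0 - L)
  filter_upwards [hlim.eventually_lt_const hδ] with k hk
  linarith [hgeom k]

def UniformlyUltimatelyBounded {E : Type*} [SeminormedAddCommGroup E] (A : E → E) (ε : ℝ) :
    Prop :=
  ∃ B : ℝ, 0 ≤ B ∧ ∀ d x : ℕ → E, (∀ k, ‖d k‖ ≤ ε) →
    (∀ k, x (k + 1) = A (x k) + d (k + 1)) → ∃ K : ℕ, ∀ k, K ≤ k → ‖x k‖ ≤ B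

theorem uniformlyUltimatelyBounded_of_contraction {E F : Type*} [SeminormedAddCommGroup E]
    [NormedSpace ℝ E] [SeminormedAddCommGroup F] [NormedSpace ℝ F] {A : E → E}
    (S : E →L[ℝ] F) {c r ε : ℝ} (hc : 0 < c) (hS : ∀ v, c * ‖v‖ ≤ ‖S v‖) (hr0 : 0 ≤ r)
    (hr1 : r < 1) (hA : ∀ v, ‖S (A v)‖ ≤ r * ‖S v‖) (hε : 0 ≤ ε) :
    UniformlyUltimatelyBounded A ε := by
  refine ⟨(‖S‖ * ε / (1 - r) + 1) / c, by have := sub_pos.2 hr1; positivity,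
    fun d x hd hx => ?_⟩
  have hstep : ∀ k, ‖S (x (k + 1))‖ ≤ r * ‖S (x k)‖ + ‖S‖ * ε := fun k =>
    calc ‖S (x (k + 1))‖ = ‖S (A (x k)) + S (d (k + 1))‖ := by rw [hx, map_add]
      _ ≤ ‖S (A (x k))‖ + ‖S‖ * ‖d (k + 1)‖ := norm_add_le_of_le le_rfl (S.le_opNorm _)
      _ ≤ r * ‖S (x k)‖ + ‖S‖ * ε := by gcongr; exacts [hA _, hd _]
  obtain ⟨K, hK⟩ := eventually_atTop.1 <|
    eventually_le_div_add_of_le_mul_add (u := fun k => ‖S (x k)‖) hr0 hr1 one_pos hstep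
  exact ⟨K, fun k hk => (le_div_iff₀' hc).2 ((hS _).trans (hK k hk))⟩

namespace Matrix

variable {n : Type*} [Fintype n] [DecidableEq n]

theorem norm_toEuclideanCLM_sq (S : Matrix n n ℝ) (v : EuclideanSpace ℝ n) :
    ‖toEuclideanCLM (𝕜 := ℝ) S v‖ ^ 2 = v.ofLp ⬝ᵥ (Sᵀ * S) *ᵥ v.ofLp := by
  rw [← real_inner_self_eq_norm_sq, EuclideanSpace.inner_eq_star_dotProduct]
  simp [← mulVec_mulVec, dotProduct_mulVec, vecMul_transpose, dotProduct_comm]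

theorem PosSemidef.exists_eq_transpose_mul_self {P : Matrix n n ℝ} (hP : P.PosSemidef) :
    ∃ S : Matrix n n ℝ, P = Sᵀ * S := by
  obtain ⟨S, rfl⟩ := CStarAlgebra.nonneg_iff_eq_star_mul_self.mp hP.nonneg
  exact ⟨S, rfl⟩

theorem PosDef.exists_eq_transpose_mul_self_with_mul_le_norm {P : Matrix n n ℝ}
    (hP : P.PosDef) :
    ∃ S : Matrix n n ℝ, P = Sᵀ * S ∧
      ∃ c > 0, ∀ v, c * ‖v‖ ≤ ‖toEuclideanCLM (𝕜 := ℝ) S v‖ := by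
  obtain ⟨S, rfl⟩ := hP.posSemidef.exists_eq_transpose_mul_self
  have hker : LinearMap.ker (toEuclideanLin S) = ⊥ := by
    refine LinearMap.ker_eq_bot'.2 fun v hv => ?_
    have hquad : v.ofLp ⬝ᵥ (Sᵀ * S) *ᵥ v.ofLp = 0 := by
      rw [← norm_toEuclideanCLM_sq, show toEuclideanCLM (𝕜 := ℝ) S v = 0 from hv]
      simp
    by_contra hv0
    exact (hP.dotProduct_mulVec_pos (x := v.ofLp) (by simpa using hv0)).ne' (by simpa using hquad)
  obtain ⟨K, -, hK⟩ := (toEuclideanLin S).exists_antilipschitzWith hker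
  exact ⟨S, rfl, antilipschitzWith_iff_exists_mul_le_norm.1 ⟨K, hK⟩⟩

theorem PosDef.exists_pos_mul_norm_sq_le {Q : Matrix n n ℝ} (hQ : Q.PosDef) :
    ∃ γ > 0, ∀ v : EuclideanSpace ℝ n, γ * ‖v‖ ^ 2 ≤ v.ofLp ⬝ᵥ Q *ᵥ v.ofLp := by
  obtain ⟨R, rfl, c, hc, hR⟩ := hQ.exists_eq_transpose_mul_self_with_mul_le_norm
  refine ⟨c ^ 2, by positivity, fun v => ?_⟩
  rw [← norm_toEuclideanCLM_sq, ← mul_pow]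
  gcongr
  exact hR v

theorem norm_toEuclideanCLM_sq_of_lyapunov {H Q S : Matrix n n ℝ}
    (hLyap : Hᵀ * (Sᵀ * S) * H - Sᵀ * S = -Q) (v : EuclideanSpace ℝ n) :
    ‖toEuclideanCLM (𝕜 := ℝ) S (toEuclideanLin H v)‖ ^ 2 =
      ‖toEuclideanCLM (𝕜 := ℝ) S v‖ ^ 2 - v.ofLp ⬝ᵥ Q *ᵥ v.ofLp := by
  have hHPH : Hᵀ * (Sᵀ * S) * H = Sᵀ * S - Q := by rw [sub_eq_add_neg, ← hLyap]; abel
  have hSH : toEuclideanCLM (𝕜 := ℝ) S (toEuclideanLin H v) =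
      toEuclideanCLM (𝕜 := ℝ) (S * H) v := by
    ext i
    simp [mulVec_mulVec]
  rw [hSH, norm_toEuclideanCLM_sq, norm_toEuclideanCLM_sq, ← dotProduct_sub, ← sub_mulVec,
    ← hHPH, transpose_mul, mul_assoc, mul_assoc, mul_assoc]

theorem exists_contraction_of_lyapunov {H Q S : Matrix n n ℝ} (hQ : Q.PosDef)
    (hLyap : Hᵀ * (Sᵀ * S) * H - Sᵀ * S = -Q) :
    ∃ r, 0 ≤ r ∧ r < 1 ∧ ∀ v, ‖toEuclideanCLM (𝕜 := ℝ) S (toEuclideanLin H v)‖ ≤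
      r * ‖toEuclideanCLM (𝕜 := ℝ) S v‖ := by
  obtain ⟨γ, hγ, hγQ⟩ := hQ.exists_pos_mul_norm_sq_le
  obtain ⟨C, hC, hSC⟩ := (toEuclideanCLM (𝕜 := ℝ) S).bound
  refine ⟨√(1 - γ / C ^ 2), Real.sqrt_nonneg _, ?_, fun v => ?_⟩
  · rw [Real.sqrt_lt' one_pos]
    have : 0 < γ / C ^ 2 := by positivity
    linarith
  set s := ‖toEuclideanCLM (𝕜 := ℝ) S v‖
  have hQ_dominates : γ / C ^ 2 * s ^ 2 ≤ v.ofLp ⬝ᵥ Q *ᵥ v.ofLp :=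
    calc γ / C ^ 2 * s ^ 2 ≤ γ / C ^ 2 * (C * ‖v‖) ^ 2 := by gcongr; exact hSC v
      _ = γ * ‖v‖ ^ 2 := by field_simp
      _ ≤ _ := hγQ v
  have hdecr : ‖toEuclideanCLM (𝕜 := ℝ) S (toEuclideanLin H v)‖ ^ 2 ≤
      (1 - γ / C ^ 2) * s ^ 2 := by
    rw [norm_toEuclideanCLM_sq_of_lyapunov hLyap]
    linarith
  calc _ ≤ √((1 - γ / C ^ 2) * s ^ 2) := Real.le_sqrt_of_sq_le hdecr
    _ = √(1 - γ / C ^ 2) * s := by rw [Real.sqrt_mul' _ (sq_nonneg _), Real.sqrt_sq (norm_nonneg _)]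

end Matrix

/-- Uniform ultimate boundedness of the disturbance-observer error dynamics
`x(k+1) = H x(k) + d(k+1)` under a discrete Lyapunov equation `Hᵀ P H − P = −Q`
with `P, Q` symmetric positive definite and disturbance bound `‖d(k)‖ ≤ ε`. -/
theorem dob_error_dynamics_uniformly_ultimately_bounded {m : ℕ}
    (H P Q : Matrix (Fin m) (Fin m) ℝ)
    (hP : P.PosDef) (hQ : Q.PosDef)
    (hLyap : Hᵀ * P * H - P = -Q)
    (ε : ℝ) (hε : 0 ≤ ε) :
    ∃ B : ℝ, 0 ≤ B ∧
      ∀ d x : ℕ → EuclideanSpace ℝ (Fin m),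
        (∀ k, ‖d k‖ ≤ ε) →
        (∀ k, x (k + 1) = Matrix.toEuclideanLin H (x k) + d (k + 1)) →
        ∃ K : ℕ, ∀ k, K ≤ k → ‖x k‖ ≤ B := by
  obtain ⟨S, rfl, c, hc, hS⟩ := hP.exists_eq_transpose_mul_self_with_mul_le_norm
  obtain ⟨r, hr0, hr1, hcontr⟩ := exists_contraction_of_lyapunov hQ hLyap
  exact uniformlyUltimatelyBounded_of_contraction (A := toEuclideanLin H) _ hc hS hr0 hr1
    hcontr hε
end

section
/- Let λ > 0, let L̂u, ΔLu be real p×q matrices, L̂w, ΔLw real p×s matrices, r ∈ ℝᵖ, w ∈ ℝˢ, and let û, Δu ∈ ℝ^q satisfy (λI + L̂uᵀ L̂u) û = L̂uᵀ r − L̂uᵀ L̂w w and, with Lu := L̂u + ΔLu and Lw := L̂w + ΔLw, (λI + Luᵀ Lu)(û + Δu) = Luᵀ r − Luᵀ Lw w. Then ‖Δu‖ ≤ (1/λ) (2‖L̂u‖‖ΔLu‖ + ‖ΔLu‖²) ‖û‖ + (1/λ) ‖ΔLu‖‖r‖ + (1/λ) (‖L̂u‖‖ΔLw‖ + ‖ΔLu‖‖L̂w‖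 + ‖ΔLu‖‖ΔLw‖) ‖w‖. -/
/-!
Subtracting the two regularized normal equations gives
`(λI + LuᵀLu) Δu = ΔLuᵀ r - (LuᵀLw - L̂uᵀL̂w) w - (LuᵀLu - L̂uᵀL̂u) û`.
Since `⟪(λI + AᵀA) x, x⟫ = λ‖x‖² + ‖Ax‖²`, the operator `λI + LuᵀLu` satisfies
`λ‖x‖ ≤ ‖(λI + LuᵀLu) x‖`, so `λ‖Δu‖` is at most the norm of the right-hand side; expanding the
two product differences bilinearly gives the constants.
-/

open Matrix
open scoped Matrix.Norms.L2Operator RealInnerProductSpace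

theorem mul_norm_le_norm_of_mul_sq_le_inner {E : Type*} [NormedAddCommGroup E]
    [InnerProductSpace ℝ E] {c : ℝ} {x y : E} (h : c * ‖x‖ ^ 2 ≤ ⟪y, x⟫) : c * ‖x‖ ≤ ‖y‖ := by
  rcases (norm_nonneg x).eq_or_lt with hx | hx
  · simp [← hx]
  · refine le_of_mul_le_mul_right ?_ hx
    calc c * ‖x‖ * ‖x‖ = c * ‖x‖ ^ 2 := by ring
      _ ≤ ⟪y, x⟫ := h
      _ ≤ ‖y‖ * ‖x‖ := real_inner_le_norm y x

namespace Matrix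

variable {l m n : Type*} [Fintype l] [Fintype m] [Fintype n] [DecidableEq n]

theorem norm_toEuclideanLin_apply_le {𝕜 : Type*} [RCLike 𝕜] (A : Matrix m n 𝕜)
    (x : EuclideanSpace 𝕜 n) :
    ‖toEuclideanLin A x‖ ≤ ‖A‖ * ‖x‖ :=
  A.l2_opNorm_mulVec x

variable [DecidableEq l] [DecidableEq m]

theorem l2_opNorm_transpose (A : Matrix m n ℝ) : ‖Aᵀ‖ = ‖A‖ := by
  rw [← conjTranspose_eq_transpose_of_trivial, l2_opNorm_conjTranspose]

theorem l2_opNorm_add_transpose_mul_add_sub_le (A dA : Matrix l m ℝ) (C dC : Matrix l n ℝ) :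
    ‖(A + dA)ᵀ * (C + dC) - Aᵀ * C‖ ≤ ‖A‖ * ‖dC‖ + ‖dA‖ * ‖C‖ + ‖dA‖ * ‖dC‖ := by
  have expand : (A + dA)ᵀ * (C + dC) - Aᵀ * C = Aᵀ * dC + dAᵀ * C + dAᵀ * dC := by
    rw [transpose_add, Matrix.add_mul, Matrix.mul_add, Matrix.mul_add]; abel
  rw [expand]
  refine norm_add₃_le.trans (add_le_add (add_le_add ?_ ?_) ?_) <;>
    exact (l2_opNorm_mul _ _).trans_eq (by rw [l2_opNorm_transpose])

theorem inner_toEuclideanLin_smul_one_add_transpose_mul_self (lam : ℝ) (A : Matrix m n ℝ)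
    (x : EuclideanSpace ℝ n) :
    ⟪toEuclideanLin (lam • (1 : Matrix n n ℝ) + Aᵀ * A) x, x⟫
      = lam * ‖x‖ ^ 2 + ‖toEuclideanLin A x‖ ^ 2 := by
  rw [map_add, map_smul, toLpLin_one, toLpLin_mul, ← conjTranspose_eq_transpose_of_trivial,
    toEuclideanLin_conjTranspose_eq_adjoint]
  simp [inner_add_left, real_inner_smul_left, LinearMap.adjoint_inner_left]

theorem mul_norm_le_norm_toEuclideanLin_smul_one_add_transpose_mul_self (lam : ℝ)
    (A : Matrix m n ℝ) (x : EuclideanSpace ℝ n) :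
    lam * ‖x‖ ≤ ‖toEuclideanLin (lam • (1 : Matrix n n ℝ) + Aᵀ * A) x‖ := by
  refine mul_norm_le_norm_of_mul_sq_le_inner ?_
  rw [inner_toEuclideanLin_smul_one_add_transpose_mul_self]
  exact le_add_of_nonneg_right (sq_nonneg _)

theorem toEuclideanLin_apply_eq_of_perturbed {𝕜 : Type*} [RCLike 𝕜] {G G' : Matrix n n 𝕜}
    {B B' : Matrix n m 𝕜} {K K' : Matrix n l 𝕜} {r : EuclideanSpace 𝕜 m}
    {w : EuclideanSpace 𝕜 l} {u du : EuclideanSpace 𝕜 n}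
    (h : toEuclideanLin G u = toEuclideanLin B r - toEuclideanLin K w)
    (h' : toEuclideanLin G' (u + du) = toEuclideanLin B' r - toEuclideanLin K' w) :
    toEuclideanLin G' du
      = toEuclideanLin (B' - B) r - toEuclideanLin (K' - K) w - toEuclideanLin (G' - G) u := by
  simp only [map_sub, map_add, LinearMap.sub_apply] at h' ⊢
  linear_combination (norm := module) h' - h

end Matrix

/-- The upper bound on the cloud control-sequence error `Δu` of the truncated
data-driven predictive controller:
`‖Δu‖ ≤ (1/λ)(2‖L̂u‖‖ΔLu‖ + ‖ΔLu‖²)‖û‖ + (1/λ)‖ΔLu‖‖r‖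
+ (1/λ)(‖L̂u‖‖ΔLw‖ + ‖ΔLu‖‖L̂w‖ + ‖ΔLu‖‖ΔLw‖)‖w‖`. -/
theorem dpc_truncation_error_norm_bound {p q s : ℕ}
    (lam : ℝ) (hlam : 0 < lam)
    (Lhu dLu : Matrix (Fin p) (Fin q) ℝ)
    (Lhw dLw : Matrix (Fin p) (Fin s) ℝ)
    (r : EuclideanSpace ℝ (Fin p)) (w : EuclideanSpace ℝ (Fin s))
    (uh du : EuclideanSpace ℝ (Fin q))
    (h1 : Matrix.toEuclideanLin (lam • (1 : Matrix (Fin q) (Fin q) ℝ) + Lhuᵀ * Lhu) uh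
        = Matrix.toEuclideanLin Lhuᵀ r - Matrix.toEuclideanLin (Lhuᵀ * Lhw) w)
    (h2 : Matrix.toEuclideanLin (lam • (1 : Matrix (Fin q) (Fin q) ℝ)
            + (Lhu + dLu)ᵀ * (Lhu + dLu)) (uh + du)
        = Matrix.toEuclideanLin (Lhu + dLu)ᵀ r
          - Matrix.toEuclideanLin ((Lhu + dLu)ᵀ * (Lhw + dLw)) w) :
    ‖du‖ ≤ (1 / lam) * (2 * ‖Lhu‖ * ‖dLu‖ + ‖dLu‖ ^ 2) * ‖uh‖
        + (1 / lam) * ‖dLu‖ * ‖r‖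
        + (1 / lam) * (‖Lhu‖ * ‖dLw‖ + ‖dLu‖ * ‖Lhw‖ + ‖dLu‖ * ‖dLw‖) * ‖w‖ := by
  have hdu := toEuclideanLin_apply_eq_of_perturbed h1 h2
  have hGram := (Lhu.l2_opNorm_add_transpose_mul_add_sub_le dLu Lhu dLu).trans_eq
    (by ring : _ = 2 * ‖Lhu‖ * ‖dLu‖ + ‖dLu‖ ^ 2)
  have hCross := Lhu.l2_opNorm_add_transpose_mul_add_sub_le dLu Lhw dLw
  have hdLu : ‖(Lhu + dLu)ᵀ - Lhuᵀ‖ = ‖dLu‖ := by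
    rw [transpose_add, add_sub_cancel_left, l2_opNorm_transpose]
  rw [add_sub_add_left_eq_sub] at hdu
  have key : lam * ‖du‖ ≤ (2 * ‖Lhu‖ * ‖dLu‖ + ‖dLu‖ ^ 2) * ‖uh‖ + ‖dLu‖ * ‖r‖
      + (‖Lhu‖ * ‖dLw‖ + ‖dLu‖ * ‖Lhw‖ + ‖dLu‖ * ‖dLw‖) * ‖w‖ :=
    calc lam * ‖du‖ ≤ ‖toEuclideanLin (lam • (1 : Matrix (Fin q) (Fin q) ℝ)
            + (Lhu + dLu)ᵀ * (Lhu + dLu)) du‖ :=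
          mul_norm_le_norm_toEuclideanLin_smul_one_add_transpose_mul_self lam _ du
      _ ≤ ‖(Lhu + dLu)ᵀ - Lhuᵀ‖ * ‖r‖ + ‖(Lhu + dLu)ᵀ * (Lhw + dLw) - Lhuᵀ * Lhw‖ * ‖w‖
          + ‖(Lhu + dLu)ᵀ * (Lhu + dLu) - Lhuᵀ * Lhu‖ * ‖uh‖ := by
        rw [hdu]
        refine (norm_sub_le _ _).trans (add_le_add ((norm_sub_le _ _).trans (add_le_add ?_ ?_)) ?_)
          <;> exact norm_toEuclideanLin_apply_le _ _
      _ ≤ _ := by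
        rw [hdLu]
        linarith [mul_le_mul_of_nonneg_right hGram (norm_nonneg uh),
          mul_le_mul_of_nonneg_right hCross (norm_nonneg w)]
  exact ((le_div_iff₀' hlam).mpr key).trans_eq (by ring)
end
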